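/- arXiv:1304.2452 — 3 statements merged into one kernel-verified Lean document; each statement's English description precedes it below -/
import Mathlib

section
/- Let σ be a connection on B(H)⁺, where H is a complex Hilbert space. Then for every positive invertible operator C on H and all positive operators A, B on H, C σ(A,B) C = σ(CAC, CBC). In particular, for positive invertible A, σ(A,B) = A^{1/2} σ(I, A^{-1/2} B A^{-1/2}) A^{1/2}. -/
open scoped NNReal

/-- `A n ↓ L`: a decreasing sequence of operators converging to `L` in the
strong operator topology. -/
def DownTo {H : Type} [NormedAddCommGroup H] [InnerProductSpace ℂ H] [CompleteSpace H]
    (A : ℕ → H →L[ℂ] H) (L : H →L[ℂ] H) : Prop :=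
  (∀ n, A (n + 1) ≤ A n) ∧ ∀ x : H, Filter.Tendsto (fun n => A n x) Filter.atTop (nhds (L x))

/-- A Kubo-Ando connection on the positive cone of `B(H)` (with respect to the
Loewner order), given as a total binary operation preserving positivity and
satisfying monotonicity, the transformer inequality and continuity from above. -/
structure IsConnection {H : Type} [NormedAddCommGroup H] [InnerProductSpace ℂ H]
    [CompleteSpace H] (σ : (H →L[ℂ] H) → (H →L[ℂ] H) → (H →L[ℂ] H)) : Prop where
  isPositive : ∀ A B : H →L[ℂ] H, A.IsPositive → B.IsPositive → (σ A B).IsPositive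
  mono : ∀ A B C D : H →L[ℂ] H, A.IsPositive → B.IsPositive → C.IsPositive → D.IsPositive →
    A ≤ C → B ≤ D → σ A B ≤ σ C D
  transformer : ∀ A B C : H →L[ℂ] H, A.IsPositive → B.IsPositive → C.IsPositive →
    C * σ A B * C ≤ σ (C * A * C) (C * B * C)
  contAbove : ∀ (A B : ℕ → H →L[ℂ] H) (A₀ B₀ : H →L[ℂ] H),
    (∀ n, (A n).IsPositive) → (∀ n, (B n).IsPositive) → A₀.IsPositive → B₀.IsPositive →
    DownTo A A₀ → DownTo B B₀ → DownTo (fun n => σ (A n) (B n)) (σ A₀ B₀)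

/-- The norm of a connection:
`‖σ‖ = sup {‖A σ B‖ : A, B positive with ‖A‖ = ‖B‖ = 1}`. -/
noncomputable def connNorm {H : Type} [NormedAddCommGroup H] [InnerProductSpace ℂ H]
    [CompleteSpace H] (σ : (H →L[ℂ] H) → (H →L[ℂ] H) → (H →L[ℂ] H)) : ℝ :=
  sSup {r : ℝ | ∃ A B : H →L[ℂ] H, A.IsPositive ∧ B.IsPositive ∧
    ‖A‖ = 1 ∧ ‖B‖ = 1 ∧ r = ‖σ A B‖}

/-- A function `f : [0,∞) → [0,∞)` is operator monotone if for every complex Hilbert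
space `K` and all selfadjoint bounded operators `A ≤ B` on `K` with spectra contained in
`[0,∞)`, one has `f(A) ≤ f(B)` (computed via the continuous functional calculus). -/
def IsOperatorMonotoneNN (f : ℝ≥0 → ℝ≥0) : Prop :=
  ∀ (K : Type) [NormedAddCommGroup K] [InnerProductSpace ℂ K] [CompleteSpace K],
    ∀ A B : K →L[ℂ] K, IsSelfAdjoint A → IsSelfAdjoint B →
      spectrum ℝ A ⊆ Set.Ici (0 : ℝ) → spectrum ℝ B ⊆ Set.Ici (0 : ℝ) → A ≤ B →
      cfc (fun x : ℝ => (f x.toNNReal : ℝ)) A ≤ cfc (fun x : ℝ => (f x.toNNReal : ℝ)) B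

variable {H : Type} [NormedAddCommGroup H] [InnerProductSpace ℂ H] [CompleteSpace H]

/-
The transformer inequality gives `C σ(A,B) C ≤ σ(CAC, CBC)`; applied with `C⁻¹`, which is again
positive, to the pair `(CAC, CBC)` and conjugated back by `C` it gives the reverse inequality.
The factorization through `σ(I, ·)` is this identity for `C = A^{1/2}` and the pair
`(I, A^{-1/2} B A^{-1/2})`.
-/

namespace ContinuousLinearMap

lemma IsPositive.conj_of_isSelfAdjoint {𝕜 E : Type*} [RCLike 𝕜] [NormedAddCommGroup E]
    [InnerProductSpace 𝕜 E] [CompleteSpace E] {A C : E →L[𝕜] E} (hA : A.IsPositive)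
    (hC : IsSelfAdjoint C) : (C * A * C).IsPositive := by
  simpa [hC.adjoint_eq, mul_def, comp_assoc] using hA.conj_adjoint C

lemma IsPositive.units_inv {u : (H →L[ℂ] H)ˣ} (hu : (u : H →L[ℂ] H).IsPositive) :
    ((u⁻¹ : (H →L[ℂ] H)ˣ) : H →L[ℂ] H).IsPositive := by
  rw [← nonneg_iff_isPositive] at *
  exact CFC.inv_nonneg_of_nonneg u hu

end ContinuousLinearMap

namespace IsConnection

variable {σ : (H →L[ℂ] H) → (H →L[ℂ] H) → (H →L[ℂ] H)}

theorem conj_unit (hσ : IsConnection σ) (u : (H →L[ℂ] H)ˣ) (hu : (u : H →L[ℂ] H).IsPositive)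
    {A B : H →L[ℂ] H} (hA : A.IsPositive) (hB : B.IsPositive) :
    u * σ A B * u = σ (u * A * u) (u * B * u) := by
  have hcancel : ∀ X : H →L[ℂ] H, ↑u⁻¹ * (↑u * X * ↑u) * ↑u⁻¹ = X := by
    simp [mul_assoc]
  have hinv := hσ.transformer _ _ _ (hA.conj_of_isSelfAdjoint hu.isSelfAdjoint)
    (hB.conj_of_isSelfAdjoint hu.isSelfAdjoint) hu.units_inv
  rw [hcancel, hcancel] at hinv
  refine le_antisymm (hσ.transformer A B u hA hB hu) ?_
  calc σ (u * A * u) (u * B * u)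
      = u * (↑u⁻¹ * σ (u * A * u) (u * B * u) * ↑u⁻¹) * u := by simp [mul_assoc]
    _ ≤ u * σ A B * u := hu.isSelfAdjoint.conjugate_le_conjugate hinv

theorem mul_self_left (hσ : IsConnection σ) (u : (H →L[ℂ] H)ˣ)
    (hu : (u : H →L[ℂ] H).IsPositive) {B : H →L[ℂ] H} (hB : B.IsPositive) :
    σ (u * u) B = u * σ 1 (↑u⁻¹ * B * ↑u⁻¹) * u := by
  rw [hσ.conj_unit u hu ContinuousLinearMap.isPositive_one
    (hB.conj_of_isSelfAdjoint hu.units_inv.isSelfAdjoint)]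
  simp [mul_assoc]

end IsConnection

/-- for positive invertible `C`, `C σ(A,B) C = σ(CAC, CBC)`; in particular,
for positive invertible `A` with positive square root `S` (`S * S = A`),
`σ(A,B) = A^{1/2} σ(I, A^{-1/2} B A^{-1/2}) A^{1/2}`. -/
theorem stmt_7 (σ : (H →L[ℂ] H) → (H →L[ℂ] H) → (H →L[ℂ] H))
    (hσ : IsConnection σ) :
    (∀ C : H →L[ℂ] H, C.IsPositive → IsUnit C →
      ∀ A B : H →L[ℂ] H, A.IsPositive → B.IsPositive →
        C * σ A B * C = σ (C * A * C) (C * B * C)) ∧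
    (∀ A B : H →L[ℂ] H, A.IsPositive → IsUnit A → B.IsPositive →
      ∀ S : H →L[ℂ] H, S.IsPositive → S * S = A →
        σ A B = S * σ 1 (Ring.inverse S * B * Ring.inverse S) * S) := by
  constructor
  · rintro _ hC ⟨u, rfl⟩ A B hA hB
    exact hσ.conj_unit u hC hA hB
  · rintro A B - hA hB S hS rfl
    obtain ⟨u, rfl⟩ := isUnit_mul_self_iff.mp hA
    rw [Ring.inverse_unit]
    exact hσ.mul_self_left u hS hB
end

section
/- Let f : [0,∞) → [0,∞) be a continuous operator monotone function with f(1) = 0. Then f(x) = 0 for all x ≥ 0. -/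
open scoped NNReal

variable {H : Type} [NormedAddCommGroup H] [InnerProductSpace ℂ H] [CompleteSpace H]

/-!
Testing operator monotonicity on scalar operators shows that `f` is monotone, so `f 0 = 0`.
Fix `x ≥ 0` and let `P`, `Q` be the orthogonal projections of `ℂ²` onto `(x, 1)` and `(1, 0)`.
Then `x P ≤ 2x Q + (1 - Q)`, and since `f` vanishes at `0` and `1`, operator monotonicity gives
`f(x) P ≤ f(2x) Q`. The quadratic form of `Q` vanishes at `(0, 1)` while that of `P` does not,
so `f(x) ≤ 0`.
-/

open ContinuousLinearMap RCLike
open scoped InnerProductSpace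

section StarProjection

variable {A : Type*} [CStarAlgebra A]

lemma cfc_mul_add_mul_one_sub {p : A} (hp : IsSelfAdjoint p) (a b : ℝ) :
    cfc (fun t : ℝ ↦ a * t + b * (1 - t)) p = a • p + b • (1 - p) := by
  rw [cfc_add .., cfc_const_mul .., cfc_const_mul .., cfc_sub .., cfc_id' .., cfc_const_one ..]

lemma IsStarProjection.cfc_smul_add_smul_one_sub {p : A} (hp : IsStarProjection p)
    (g : ℝ → ℝ) (a b : ℝ) : cfc g (a • p + b • (1 - p)) = g a • p + g b • (1 - p) := by
  have hspec : spectrum ℝ p ⊆ {0, 1} :=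
    (isIdempotentElem_iff_spectrum_subset ℝ p hp.isSelfAdjoint).mp hp.isIdempotentElem
  rw [← cfc_mul_add_mul_one_sub hp.isSelfAdjoint, ← cfc_mul_add_mul_one_sub hp.isSelfAdjoint,
    ← cfc_comp' g _ p ((((Set.toFinite _).subset hspec).image _).continuousOn g)]
  refine cfc_congr fun t ht ↦ ?_
  rcases hspec ht with rfl | rfl <;> simp

lemma IsStarProjection.smul_add_smul_one_sub_nonneg [PartialOrder A] [StarOrderedRing A]
    {p : A} (hp : IsStarProjection p) {a b : ℝ} (ha : 0 ≤ a) (hb : 0 ≤ b) :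
    0 ≤ a • p + b • (1 - p) :=
  add_nonneg (smul_nonneg ha hp.nonneg) (smul_nonneg hb hp.one_sub.nonneg)

end StarProjection

section QuadraticForm

variable {𝕜 E : Type*} [RCLike 𝕜] [NormedAddCommGroup E] [InnerProductSpace 𝕜 E]

lemma ContinuousLinearMap.re_inner_le_of_le {S T : E →L[𝕜] E} (h : S ≤ T) (w : E) :
    re ⟪S w, w⟫_𝕜 ≤ re ⟪T w, w⟫_𝕜 := by
  simpa [inner_sub_left] using h.re_inner_nonneg_left w

lemma ContinuousLinearMap.le_iff_re_inner_le [CompleteSpace E] {S T : E →L[𝕜] E}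
    (hS : IsSelfAdjoint S) (hT : IsSelfAdjoint T) :
    S ≤ T ↔ ∀ w, re ⟪S w, w⟫_𝕜 ≤ re ⟪T w, w⟫_𝕜 := by
  simp [le_def, isPositive_def', hT.sub hS, reApplyInnerSelf_apply, inner_sub_left]

lemma Submodule.re_inner_starProjection_singleton (v w : E) :
    re ⟪(𝕜 ∙ v).starProjection w, w⟫_𝕜 = ‖⟪v, w⟫_𝕜‖ ^ 2 / ‖v‖ ^ 2 := by
  rw [starProjection_singleton, inner_smul_left, map_div₀, conj_ofReal, div_mul_eq_mul_div,
    RCLike.conj_mul, ← ofReal_pow, ← ofReal_div, ofReal_re]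

lemma ContinuousLinearMap.re_inner_smul_add_smul_one_sub_apply {F : Type*} [NormedAddCommGroup F]
    [InnerProductSpace ℂ F] (p : F →L[ℂ] F) (a b : ℝ) (w : F) :
    re ⟪(a • p + b • (1 - p)) w, w⟫_ℂ = a * re ⟪p w, w⟫_ℂ + b * (‖w‖ ^ 2 - re ⟪p w, w⟫_ℂ) := by
  simp [← Complex.ofReal_pow]

end QuadraticForm

lemma mul_norm_real_mul_add_sq_div_le {x : ℝ} (hx : 0 ≤ x) (a b : ℂ) :
    x * (‖x * a + b‖ ^ 2 / (x ^ 2 + 1)) ≤ 2 * x * ‖a‖ ^ 2 + ‖b‖ ^ 2 := by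
  have htri : ‖x * a + b‖ ≤ x * ‖a‖ + ‖b‖ := by
    simpa [norm_mul, abs_of_nonneg hx] using norm_add_le ((x : ℂ) * a) b
  rw [mul_div_assoc', div_le_iff₀ (by positivity)]
  nlinarith [pow_le_pow_left₀ (norm_nonneg _) htri 2, sq_nonneg (x - 1), norm_nonneg a,
    norm_nonneg b, mul_nonneg hx (sq_nonneg (x * ‖a‖ - ‖b‖)), mul_nonneg hx (sq_nonneg ‖a‖)]

namespace EuclideanSpace

lemma norm_sq_fin_two (w : EuclideanSpace ℂ (Fin 2)) : ‖w‖ ^ 2 = ‖w 0‖ ^ 2 + ‖w 1‖ ^ 2 := by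
  simp [norm_sq_eq, Fin.sum_univ_two]

lemma re_inner_starProjection_span_real_one (x : ℝ) (w : EuclideanSpace ℂ (Fin 2)) :
    re ⟪(ℂ ∙ !₂[(x : ℂ), 1]).starProjection w, w⟫_ℂ = ‖x * w 0 + w 1‖ ^ 2 / (x ^ 2 + 1) := by
  rw [Submodule.re_inner_starProjection_singleton]
  simp [PiLp.inner_apply, norm_sq_eq, Fin.sum_univ_two, mul_comm]

lemma re_inner_starProjection_span_one_zero (w : EuclideanSpace ℂ (Fin 2)) :
    re ⟪(ℂ ∙ !₂[1, 0]).starProjection w, w⟫_ℂ = ‖w 0‖ ^ 2 := by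
  rw [Submodule.re_inner_starProjection_singleton]
  simp [PiLp.inner_apply, norm_sq_eq, Fin.sum_univ_two]

lemma smul_starProjection_span_le {x : ℝ} (hx : 0 ≤ x) :
    x • (ℂ ∙ !₂[(x : ℂ), 1]).starProjection + (0 : ℝ) • (1 - (ℂ ∙ !₂[(x : ℂ), 1]).starProjection) ≤
      (2 * x) • (ℂ ∙ !₂[(1 : ℂ), 0]).starProjection +
        (1 : ℝ) • (1 - (ℂ ∙ !₂[(1 : ℂ), 0]).starProjection) := by
  rw [le_iff_re_inner_le
    (isStarProjection_starProjection.smul_add_smul_one_sub_nonneg hx le_rfl).isSelfAdjoint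
    (isStarProjection_starProjection.smul_add_smul_one_sub_nonneg (by positivity)
      zero_le_one).isSelfAdjoint]
  intro w
  simp only [re_inner_smul_add_smul_one_sub_apply, re_inner_starProjection_span_real_one,
    re_inner_starProjection_span_one_zero, norm_sq_fin_two]
  linarith [mul_norm_real_mul_add_sq_div_le hx (w 0) (w 1)]

end EuclideanSpace

namespace IsOperatorMonotoneNN

variable {f : ℝ≥0 → ℝ≥0}

theorem monotone (hm : IsOperatorMonotoneNN f) : Monotone f := by
  intro x y hxy
  have hle := hm ℂ (algebraMap ℝ (ℂ →L[ℂ] ℂ) x) (algebraMap ℝ _ y) (.algebraMap _ (.all _))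
    (.algebraMap _ (.all _)) (fun _ ht ↦ spectrum_nonneg_of_nonneg (algebraMap_nonneg _ x.2) ht)
    (fun _ ht ↦ spectrum_nonneg_of_nonneg (algebraMap_nonneg _ y.2) ht) (algebraMap_mono _ hxy)
  simpa [cfc_algebraMap] using hle

theorem eq_zero_of_map_zero_of_map_one (hm : IsOperatorMonotoneNN f) (h0 : f 0 = 0)
    (h1 : f 1 = 0) (x : ℝ≥0) : f x = 0 := by
  have hP : IsStarProjection (ℂ ∙ !₂[(x : ℂ), 1]).starProjection :=
    isStarProjection_starProjection
  have hQ : IsStarProjection (ℂ ∙ !₂[(1 : ℂ), 0]).starProjection :=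
    isStarProjection_starProjection
  have hA := hP.smul_add_smul_one_sub_nonneg x.2 le_rfl
  have hB := hQ.smul_add_smul_one_sub_nonneg (a := 2 * x) (by positivity) zero_le_one
  have hfAB := hm _ _ _ hA.isSelfAdjoint hB.isSelfAdjoint
    (fun _ ht ↦ spectrum_nonneg_of_nonneg hA ht) (fun _ ht ↦ spectrum_nonneg_of_nonneg hB ht)
    (EuclideanSpace.smul_starProjection_span_le x.2)
  rw [hP.cfc_smul_add_smul_one_sub, hQ.cfc_smul_add_smul_one_sub] at hfAB
  have hform := re_inner_le_of_le hfAB !₂[0, 1]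
  simp only [re_inner_smul_add_smul_one_sub_apply,
    EuclideanSpace.re_inner_starProjection_span_real_one,
    EuclideanSpace.re_inner_starProjection_span_one_zero] at hform
  have hfx : (f x : ℝ) * ((x : ℝ) ^ 2 + 1)⁻¹ ≤ 0 := by simpa [h0, h1] using hform
  rw [mul_inv_le_iff₀ (by positivity), zero_mul] at hfx
  exact NNReal.coe_eq_zero.mp (le_antisymm hfx (f x).coe_nonneg)

end IsOperatorMonotoneNN

theorem stmt_8_general (f : ℝ≥0 → ℝ≥0) (hm : IsOperatorMonotoneNN f)
    (h1 : f 1 = 0) : ∀ x : ℝ≥0, f x = 0 :=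
  hm.eq_zero_of_map_zero_of_map_one
    (nonpos_iff_eq_zero.mp ((hm.monotone zero_le_one).trans h1.le)) h1

/-- a continuous operator monotone function `f : [0,∞) → [0,∞)` with
`f(1) = 0` is identically zero. -/
theorem stmt_8 (f : ℝ≥0 → ℝ≥0) (hc : Continuous f) (hm : IsOperatorMonotoneNN f)
    (h1 : f 1 = 0) : ∀ x : ℝ≥0, f x = 0 :=
  stmt_8_general f hm h1
end

section
/- Let σ be a connection on B(H)⁺, where H is a nontrivial complex Hilbert space. The following are equivalent: (i) σ is a mean; (ii) ‖σ‖ = 1, where ‖σ‖ = sup{‖σ(A,B)‖ : A, B positive with ‖A‖ = ‖B‖ = 1}; (iii) ‖σ(A,A)‖ = ‖A‖ for every positive operator A; (iv) ‖σ(A,A)‖ = ‖A‖ for some positive invertible operator A. -/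
open scoped NNReal

variable {H : Type} [NormedAddCommGroup H] [InnerProductSpace ℂ H] [CompleteSpace H]

/-!
Everything is governed by `σ(1, 1)`. For a projection `P` and `s > 0` the transformer
inequality is an equality at the invertible `C = P + s(1 - P)`, so
`C σ(1, 1) C = σ(C², C²)` is monotone in `s`; hence the off-diagonal part of `σ(1, 1)` with
respect to `P` is nonnegative, therefore zero, and `σ(1, 1)` commutes with every rank-one
projection: `σ(1, 1) = c` for a scalar `c ≥ 0`. Conjugating by `√A` gives `σ(A, A) = c A` for
invertible `A`, and for arbitrary positive `A` via `σ(A, A) ≤ σ(A + ε, A + ε)`. Since also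
`‖σ‖ = ‖σ(1, 1)‖ = c`, each of the four conditions says `c = 1`.
-/

open Filter Topology ContinuousLinearMap
open scoped ComplexOrder

theorem le_of_forall_pos_le_add_smul {M : Type*} [AddCommGroup M] [Module ℝ M]
    [TopologicalSpace M] [ContinuousAdd M] [ContinuousSMul ℝ M] [Preorder M]
    [ClosedIciTopology M] {a b c : M} (h : ∀ ε : ℝ, 0 < ε → a ≤ b + ε • c) : a ≤ b := by
  have hlim : Tendsto (fun ε : ℝ => b + ε • c) (𝓝[>] 0) (𝓝 b) := by
    simpa using (tendsto_const_nhds.add (tendsto_id.smul_const c)).mono_left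
      (nhdsWithin_le_nhds (a := (0 : ℝ)))
  exact ge_of_tendsto hlim (eventually_nhdsWithin_of_forall h)

theorem CStarAlgebra.mul_eq_zero_of_star_mul_mul_eq_zero {A : Type*} [CStarAlgebra A]
    [PartialOrder A] [StarOrderedRing A] {x p : A} (hx : 0 ≤ x) (h : star p * x * p = 0) :
    x * p = 0 := by
  obtain ⟨b, rfl⟩ := CStarAlgebra.nonneg_iff_eq_star_mul_self.mp hx
  have hbp : b * p = 0 :=
    (CStarRing.star_mul_self_eq_zero_iff _).mp (by simpa [star_mul, mul_assoc] using h)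
  rw [mul_assoc, hbp, mul_zero]

theorem IsIdempotentElem.add_smul_one_sub_mul_add_smul_one_sub {R A : Type*} [CommRing R]
    [Ring A] [Algebra R A] {p : A} (hp : IsIdempotentElem p) (a b : R) :
    (p + a • (1 - p)) * (p + b • (1 - p)) = p + (a * b) • (1 - p) := by
  simp only [add_mul, mul_add, smul_mul_assoc, mul_smul_comm, mul_sub, sub_mul, hp.eq, mul_one,
    one_mul, sub_self, smul_zero, add_zero]
  module

namespace IsStarProjection

variable {A : Type*} [CStarAlgebra A] [PartialOrder A] [StarOrderedRing A] {p : A}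

theorem isStrictlyPositive_add_smul_one_sub (hp : IsStarProjection p) {s : ℝ} (hs : 0 < s) :
    IsStrictlyPositive (p + s • (1 - p)) := by
  refine IsUnit.isStrictlyPositive ?_ (add_nonneg hp.nonneg (smul_nonneg hs.le hp.one_sub_nonneg))
  refine isUnit_iff_exists.mpr ⟨p + s⁻¹ • (1 - p), ?_, ?_⟩ <;>
    simp [hp.isIdempotentElem.add_smul_one_sub_mul_add_smul_one_sub, hs.ne']

/-- The off-diagonal part of `t` has zero compression by `p`; being nonnegative, it then
vanishes on the range of `p`. -/
theorem commute_of_offDiag_nonneg (hp : IsStarProjection p) {t : A} (ht : IsSelfAdjoint t)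
    (h : 0 ≤ p * t * (1 - p) + (1 - p) * t * p) : Commute p t := by
  have hpp : p * p = p := hp.isIdempotentElem
  have hpq : p * (1 - p) = 0 := hp.mul_one_sub_self
  have hqp : (1 - p) * p = 0 := hp.one_sub_mul_self
  have hcompress : star p * (p * t * (1 - p) + (1 - p) * t * p) * p = 0 := by
    simp only [hp.isSelfAdjoint.star_eq, mul_add, add_mul, mul_assoc, hqp, ← mul_assoc p p, hpp]
    simp [← mul_assoc, hpq]
  have hlower : (1 - p) * t * p = 0 := by
    have := CStarAlgebra.mul_eq_zero_of_star_mul_mul_eq_zero h hcompress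
    simpa [add_mul, mul_assoc, hqp, hpp] using this
  have hright : t * p = p * t * p := by
    rw [sub_mul, sub_mul, one_mul, sub_eq_zero] at hlower
    exact hlower
  have hleft : p * t = p * t * p := by
    simpa [star_mul, hp.isSelfAdjoint.star_eq, ht.star_eq, mul_assoc] using congrArg star hright
  exact hleft.trans hright.symm

end IsStarProjection

theorem ContinuousLinearMap.exists_eq_smul_one_of_forall_commute_starProjection {𝕜 E : Type*}
    [RCLike 𝕜] [NormedAddCommGroup E] [InnerProductSpace 𝕜 E] {T : E →L[𝕜] E}
    (h : ∀ x : E, Commute (𝕜 ∙ x).starProjection T) : ∃ c : 𝕜, T = c • 1 := by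
  obtain ⟨c, hc⟩ := LinearMap.exists_eq_smul_id_of_forall_notLinearIndependent (R := 𝕜)
    (f := (T : E →ₗ[𝕜] E)) fun x => by
      rcases eq_or_ne x 0 with rfl | hx
      · exact fun h0 => h0.ne_zero 0 rfl
      have hTx : T x ∈ 𝕜 ∙ x := by
        have hPx : (𝕜 ∙ x).starProjection x = x :=
          Submodule.starProjection_eq_self_iff.mpr (Submodule.mem_span_singleton_self x)
        have hcomm : (𝕜 ∙ x).starProjection (T x) = T ((𝕜 ∙ x).starProjection x) :=
          congr($((h x).eq) x)
        rw [hPx] at hcomm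
        exact hcomm ▸ Submodule.starProjection_apply_mem _ _
      rw [LinearIndependent.pair_iff' hx, not_forall_not]
      exact Submodule.mem_span_singleton.mp hTx
  exact ⟨c, ContinuousLinearMap.coe_inj.mp (by simpa using hc)⟩

namespace IsConnection

variable {σ : (H →L[ℂ] H) → (H →L[ℂ] H) → (H →L[ℂ] H)} (hσ : IsConnection σ)
include hσ

theorem nonneg_apply {A B : H →L[ℂ] H} (hA : 0 ≤ A) (hB : 0 ≤ B) : 0 ≤ σ A B := by
  rw [nonneg_iff_isPositive] at *
  exact hσ.isPositive A B hA hB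

theorem apply_mono {A B C D : H →L[ℂ] H} (hA : 0 ≤ A) (hB : 0 ≤ B) (hAC : A ≤ C)
    (hBD : B ≤ D) : σ A B ≤ σ C D := by
  have hC := hA.trans hAC
  have hD := hB.trans hBD
  rw [nonneg_iff_isPositive] at hA hB hC hD
  exact hσ.mono A B C D hA hB hC hD hAC hBD

theorem conj_apply_le {A B C : H →L[ℂ] H} (hA : 0 ≤ A) (hB : 0 ≤ B) (hC : 0 ≤ C) :
    C * σ A B * C ≤ σ (C * A * C) (C * B * C) := by
  simp only [nonneg_iff_isPositive] at hA hB hC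
  exact hσ.transformer A B C hA hB hC

/-- The transformer inequality is an equality for invertible `C`: apply it once more
with `C⁻¹`. -/
theorem conj_apply {A B C : H →L[ℂ] H} (hA : 0 ≤ A) (hB : 0 ≤ B) (hC : IsStrictlyPositive C) :
    C * σ A B * C = σ (C * A * C) (C * B * C) := by
  refine le_antisymm (hσ.conj_apply_le hA hB hC.nonneg) ?_
  have hCsa : IsSelfAdjoint C := hC.isSelfAdjoint
  lift C to (H →L[ℂ] H)ˣ using hC.isUnit
  have hCinv : 0 ≤ (↑C⁻¹ : H →L[ℂ] H) := CFC.inv_nonneg_of_nonneg C hC.nonneg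
  have hcancel : ∀ X : H →L[ℂ] H, ↑C⁻¹ * (↑C * X * ↑C) * ↑C⁻¹ = X := fun X => by
    simp [mul_assoc]
  have hinv := hσ.conj_apply_le (hCsa.conjugate_nonneg hA) (hCsa.conjugate_nonneg hB) hCinv
  rw [hcancel, hcancel] at hinv
  calc σ (C * A * C) (C * B * C)
      = C * (↑C⁻¹ * σ (C * A * C) (C * B * C) * ↑C⁻¹) * C := by simp [mul_assoc]
    _ ≤ C * σ A B * C := hCsa.conjugate_le_conjugate hinv

theorem conj_apply_one_one_mono {P : H →L[ℂ] H} (hP : IsStarProjection P) {s t : ℝ}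
    (hs : 0 < s) (hst : s ≤ t) :
    (P + s • (1 - P)) * σ 1 1 * (P + s • (1 - P)) ≤
      (P + t • (1 - P)) * σ 1 1 * (P + t • (1 - P)) := by
  have hsq : ∀ r : ℝ, 0 < r → (P + r • (1 - P)) * σ 1 1 * (P + r • (1 - P)) =
      σ (P + (r * r) • (1 - P)) (P + (r * r) • (1 - P)) := fun r hr => by
    rw [hσ.conj_apply zero_le_one zero_le_one (hP.isStrictlyPositive_add_smul_one_sub hr),
      mul_one, hP.isIdempotentElem.add_smul_one_sub_mul_add_smul_one_sub]
  have hle : P + (s * s) • (1 - P) ≤ P + (t * t) • (1 - P) :=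
    add_le_add_right (smul_le_smul_of_nonneg_right (by nlinarith) hP.one_sub_nonneg) P
  have hnonneg : 0 ≤ P + (s * s) • (1 - P) :=
    add_nonneg hP.nonneg (smul_nonneg (by positivity) hP.one_sub_nonneg)
  rw [hsq s hs, hsq t (hs.trans_le hst)]
  exact hσ.apply_mono hnonneg hnonneg hle hle

/-- `s ↦ (P + s(1 - P)) σ(1, 1) (P + s(1 - P))` is monotone on `(0, ∞)`, so its first-order
term in `s` is nonnegative. -/
theorem offDiag_apply_one_one_nonneg {P : H →L[ℂ] H} (hP : IsStarProjection P) :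
    0 ≤ P * σ 1 1 * (1 - P) + (1 - P) * σ 1 1 * P := by
  refine le_of_forall_pos_le_add_smul (c := (1 - P) * σ 1 1 * (1 - P)) fun ε hε => ?_
  have hmono := sub_nonneg.mpr
    (hσ.conj_apply_one_one_mono hP (s := ε / 4) (t := 3 * ε / 4) (by positivity) (by linarith))
  have hexpand :
      (P + (3 * ε / 4) • (1 - P)) * σ 1 1 * (P + (3 * ε / 4) • (1 - P)) -
          (P + (ε / 4) • (1 - P)) * σ 1 1 * (P + (ε / 4) • (1 - P)) =
        (ε / 2) • ((P * σ 1 1 * (1 - P) + (1 - P) * σ 1 1 * P) +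
          ε • ((1 - P) * σ 1 1 * (1 - P))) := by
    simp only [add_mul, mul_add, smul_mul_assoc, mul_smul_comm, smul_smul, smul_add]
    module
  have hscaled := smul_nonneg (inv_nonneg.mpr (half_pos hε).le) (hexpand ▸ hmono)
  rwa [smul_smul, inv_mul_cancel₀ (half_pos hε).ne', one_smul] at hscaled

theorem exists_apply_one_one_eq_smul_one [Nontrivial H] :
    ∃ c : ℂ, 0 ≤ c ∧ σ 1 1 = c • 1 := by
  have hT : 0 ≤ σ 1 1 := hσ.nonneg_apply zero_le_one zero_le_one
  obtain ⟨c, hc⟩ := exists_eq_smul_one_of_forall_commute_starProjection fun x : H =>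
    (isStarProjection_starProjection (U := ℂ ∙ x)).commute_of_offDiag_nonneg
      hT.isSelfAdjoint (hσ.offDiag_apply_one_one_nonneg isStarProjection_starProjection)
  refine ⟨c, ?_, hc⟩
  rw [hc, nonneg_iff_isPositive, ← isPositive_toLinearMap_iff] at hT
  exact (LinearMap.isPositive_one.isPositive_smul_iff one_ne_zero).mp (by simpa using hT)

theorem apply_self_eq_smul {c : ℂ} (hc : σ 1 1 = c • 1) {A : H →L[ℂ] H} (hA : 0 ≤ A) :
    σ A A = c • A := by
  have hstrict : ∀ {B : H →L[ℂ] H}, IsStrictlyPositive B → σ B B = c • B := fun {B} hB => by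
    have h := hσ.conj_apply zero_le_one zero_le_one (hB.sqrt B)
    rw [mul_one, CFC.sqrt_mul_sqrt_self B hB.nonneg, hc] at h
    rw [← h, mul_smul_comm, mul_one, smul_mul_assoc, CFC.sqrt_mul_sqrt_self B hB.nonneg]
  refine le_antisymm ?_ ?_
  · refine le_of_forall_pos_le_add_smul (c := c • 1) fun ε hε => ?_
    have hAε : IsStrictlyPositive (A + ε • 1) :=
      IsStrictlyPositive.nonneg_add hA (IsStrictlyPositive.smul hε isStrictlyPositive_one)
    calc σ A A ≤ σ (A + ε • 1) (A + ε • 1) :=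
          hσ.apply_mono hA hA (le_add_of_nonneg_right (smul_nonneg hε.le zero_le_one))
            (le_add_of_nonneg_right (smul_nonneg hε.le zero_le_one))
      _ = c • A + ε • c • 1 := by rw [hstrict hAε, smul_add, smul_comm]
  · have h := hσ.conj_apply_le zero_le_one zero_le_one (CFC.sqrt_nonneg A)
    rwa [mul_one, CFC.sqrt_mul_sqrt_self A hA, hc, mul_smul_comm, mul_one, smul_mul_assoc,
      CFC.sqrt_mul_sqrt_self A hA] at h

theorem connNorm_eq_norm_apply_one_one [Nontrivial H] : connNorm σ = ‖σ 1 1‖ := by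
  refine IsGreatest.csSup_eq ⟨⟨1, 1, isPositive_one, isPositive_one, norm_one, norm_one, rfl⟩, ?_⟩
  rintro r ⟨A, B, hA, hB, hA1, hB1, rfl⟩
  rw [← nonneg_iff_isPositive] at hA hB
  have hle : ∀ {X : H →L[ℂ] H}, 0 ≤ X → ‖X‖ = 1 → X ≤ 1 := fun hX hX1 =>
    (CStarAlgebra.norm_le_one_iff_of_nonneg _ hX).mp hX1.le
  exact CStarAlgebra.norm_le_norm_of_nonneg_of_le (hσ.nonneg_apply hA hB)
    (hσ.apply_mono hA hB (hle hA hA1) (hle hB hB1))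

end IsConnection

/-- TFAE: (i) `σ` is a mean; (ii) `‖σ‖ = 1`;
(iii) `‖σ(A,A)‖ = ‖A‖` for every positive `A`;
(iv) `‖σ(A,A)‖ = ‖A‖` for some positive invertible `A`. -/
theorem stmt_10 [Nontrivial H] (σ : (H →L[ℂ] H) → (H →L[ℂ] H) → (H →L[ℂ] H))
    (hσ : IsConnection σ) :
    List.TFAE
      [(∀ A : H →L[ℂ] H, A.IsPositive → σ A A = A),
       connNorm σ = 1,
       (∀ A : H →L[ℂ] H, A.IsPositive → ‖σ A A‖ = ‖A‖),
       (∃ A : H →L[ℂ] H, A.IsPositive ∧ IsUnit A ∧ ‖σ A A‖ = ‖A‖)] := by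
  obtain ⟨c, hc0, hc⟩ := hσ.exists_apply_one_one_eq_smul_one
  have hself : ∀ A : H →L[ℂ] H, A.IsPositive → σ A A = c • A := fun A hA =>
    hσ.apply_self_eq_smul hc ((nonneg_iff_isPositive A).mpr hA)
  tfae_have 1 → 3 := fun h A hA => by rw [h A hA]
  tfae_have 3 → 4 := fun h => ⟨1, isPositive_one, isUnit_one, h 1 isPositive_one⟩
  tfae_have 1 → 2 := fun h => by
    rw [hσ.connNorm_eq_norm_apply_one_one, h 1 isPositive_one, norm_one]
  tfae_have 2 → 4 := fun h =>
    ⟨1, isPositive_one, isUnit_one, by rw [← hσ.connNorm_eq_norm_apply_one_one, h, norm_one]⟩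
  tfae_have 4 → 1 := by
    rintro ⟨A, hA, hAu, hnorm⟩
    have hnorm_c : ‖c‖ = 1 := by
      rw [hself A hA, norm_smul] at hnorm
      exact (mul_eq_right₀ (norm_ne_zero_iff.mpr hAu.ne_zero)).mp hnorm
    have hc1 : c = 1 := by rw [Complex.eq_coe_norm_of_nonneg hc0, hnorm_c, Complex.ofReal_one]
    intro B hB
    rw [hself B hB, hc1, one_smul]
  tfae_finish
end
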